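/- For a commutative Hopf algebroid H over A, the set Brt(H, A) of local biretractions with the convolution product (α∗β)(h) = β(t(α(h_(1)))) β(h_(2)) is a regular monoid: the product is associative, the counit ε is a two-sided unit, and every α has a pseudo-inverse α* = (α∘t)^{-1} ∘ α ∘ S satisfying α ∗ α* ∗ α = α and α* ∗ α ∗ α* = α*. -/

import Mathlib

open TensorProduct

/-- The unital ideal `A·e` generated by an element `e` of a commutative ring. -/
def idealOf {A : Type*} [CommRing A] (e : A) : Set A := Set.range (fun a => a * e)

/-- A commutative Hopf algebroid over a commutative base algebra `A`:
a commutative algebra `H` with source and target maps `s, t : A → H`,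
comultiplication `Δ`, counit `ε` and antipode `S` satisfying the standard axioms
(`S∘t = s`, `S∘s = t`, `S(h₍₁₎)h₍₂₎ = s(ε h)`, `h₍₁₎S(h₍₂₎) = t(ε h)`, etc.). -/
structure CommHopfAlgebroid (k A H : Type*) [CommRing k] [CommRing A] [CommRing H]
    [Algebra k A] [Algebra k H] where
  s : A →ₐ[k] H
  t : A →ₐ[k] H
  comul : H →ₐ[k] H ⊗[k] H
  counit : H →ₐ[k] A
  antipode : H →ₐ[k] H
  coassoc :
    (TensorProduct.assoc k H H H).toLinearMap ∘ₗ
      (TensorProduct.map comul.toLinearMap LinearMap.id) ∘ₗ comul.toLinearMap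
    = (TensorProduct.map LinearMap.id comul.toLinearMap) ∘ₗ comul.toLinearMap
  counit_left : (LinearMap.mul' k H) ∘ₗ
      (TensorProduct.map (t.toLinearMap ∘ₗ counit.toLinearMap) LinearMap.id) ∘ₗ
        comul.toLinearMap = LinearMap.id
  counit_right : (LinearMap.mul' k H) ∘ₗ
      (TensorProduct.map LinearMap.id (s.toLinearMap ∘ₗ counit.toLinearMap)) ∘ₗ
        comul.toLinearMap = LinearMap.id
  counit_s : ∀ a : A, counit (s a) = a
  counit_t : ∀ a : A, counit (t a) = a
  antipode_s : ∀ a : A, antipode (s a) = t a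
  antipode_t : ∀ a : A, antipode (t a) = s a
  comul_t : ∀ a : A, comul (t a) = t a ⊗ₜ[k] 1
  comul_s : ∀ a : A, comul (s a) = 1 ⊗ₜ[k] s a
  antipode_left : (LinearMap.mul' k H) ∘ₗ
      (TensorProduct.map antipode.toLinearMap LinearMap.id) ∘ₗ comul.toLinearMap
    = s.toLinearMap ∘ₗ counit.toLinearMap
  antipode_right : (LinearMap.mul' k H) ∘ₗ
      (TensorProduct.map LinearMap.id antipode.toLinearMap) ∘ₗ comul.toLinearMap
    = t.toLinearMap ∘ₗ counit.toLinearMap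

variable {k A H : Type*} [CommRing k] [CommRing A] [CommRing H] [Algebra k A] [Algebra k H]

/-- The convolution product of right `A`-linear maps `H → A`:
`(α ∗ β)(h) = β(t(α(h₍₁₎)) · h₍₂₎) = β(t(α(h₍₁₎))) · β(h₍₂₎)`. -/
noncomputable def brtConv (D : CommHopfAlgebroid k A H) (α β : H →ₗ[k] A) : H →ₗ[k] A :=
  β ∘ₗ (LinearMap.mul' k H) ∘ₗ
    (TensorProduct.map (D.t.toLinearMap ∘ₗ α) LinearMap.id) ∘ₗ D.comul.toLinearMap

/-- `e` is a witness for axiom (BRT2) of a local biretraction `α`: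
`α(t(e)) = α(1)` and `α∘t` restricts to a bijection `A·e → A·α(1)`. -/
def IsBrtWitness (D : CommHopfAlgebroid k A H) (α : H →ₗ[k] A) (e : A) : Prop :=
  α (D.t e) = α 1 ∧ Set.BijOn (fun a => α (D.t a)) (idealOf e) (idealOf (α 1))

/-- A local biretraction of a commutative Hopf algebroid: a linear multiplicative
map `α : H → A` satisfying (BRT1) `α(s(a)) = a·α(1)` and (BRT2). -/
def IsBiretraction (D : CommHopfAlgebroid k A H) (α : H →ₗ[k] A) : Prop :=
  (∀ x y : H, α (x * y) = α x * α y) ∧ (∀ a : A, α (D.s a) = a * α 1) ∧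
    ∃ e : A, IsBrtWitness D α e

/-!
Writing `Φ_α h = t(α h₍₁₎) h₍₂₎`, the convolution is `α ∗ β = β ∘ Φ_α`, and coassociativity
together with `Δ(t a) = t a ⊗ 1` gives `Φ_{α∗β} = Φ_β ∘ Φ_α`; associativity follows, and
multiplicativity and (BRT1) are transported through `Φ_α`. On the base,
`(α ∗ β) ∘ t = (β ∘ t) ∘ (α ∘ t)`, and two local bijections `A e₁ → A α(1)`, `A e₂ → A β(1)`
compose to one on `A c`, where `α(t c) = e₂ α(1)`.

For the pseudo-inverse `α*`, the antipode axioms give `α ∗ α* = (α∘t)⁻¹ ∘ α ∘ t ∘ ε` and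
`α* ∗ α = α ∘ s ∘ ε`, and convolving a multiplicative `δ` on the left with a map `γ` such that
`δ ∘ t ∘ γ = δ ∘ t ∘ ε` does not change `δ`.
-/

open Set

section LocalBijection

lemma apply_mul_apply_one {M N : Type*} [MulOneClass M] [Mul N] {f : M → N}
    (hf : ∀ x y, f (x * y) = f x * f y) (x : M) : f x * f 1 = f x := by
  rw [← hf, mul_one]

lemma self_mem_idealOf (e : A) : e ∈ idealOf e := ⟨1, one_mul e⟩

lemma mul_mem_idealOf (a : A) {e x : A} (hx : x ∈ idealOf e) : a * x ∈ idealOf e := by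
  obtain ⟨b, rfl⟩ := hx
  exact ⟨a * b, mul_assoc a b e⟩

lemma idealOf_subset {e x : A} (hx : x ∈ idealOf e) : idealOf x ⊆ idealOf e := by
  rintro _ ⟨a, rfl⟩
  exact mul_mem_idealOf a hx

lemma apply_mem_idealOf_apply_one {M : Type*} [MulOneClass M] {f : M → A}
    (hf : ∀ x y, f (x * y) = f x * f y) (x : M) : f x ∈ idealOf (f 1) :=
  ⟨f x, apply_mul_apply_one hf x⟩

lemma mul_apply_one_of_mem {M : Type*} [MulOneClass M] {f : M → A}
    (hf : ∀ x y, f (x * y) = f x * f y) {a : A} (ha : a ∈ idealOf (f 1)) : a * f 1 = a := by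
  obtain ⟨b, rfl⟩ := ha
  rw [mul_assoc, apply_mul_apply_one hf]

/-- Axiom (BRT2) for `f = α ∘ t`. -/
def IsLocalBijection (f : A → A) (e : A) : Prop :=
  f e = f 1 ∧ BijOn f (idealOf e) (idealOf (f 1))

variable {f g : A → A}

lemma bijOn_idealOf_of_mem (hf : ∀ a b, f (a * b) = f a * f b) {e x : A}
    (hbij : BijOn f (idealOf e) (idealOf (f 1))) (hx : x ∈ idealOf e) :
    BijOn f (idealOf x) (idealOf (f x)) := by
  refine ⟨?_, hbij.injOn.mono (idealOf_subset hx), ?_⟩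
  · rintro _ ⟨a, rfl⟩
    exact ⟨f a, (hf a x).symm⟩
  · rintro _ ⟨b, rfl⟩
    obtain ⟨a, -, hfa⟩ := hbij.surjOn (⟨b, rfl⟩ : b * f 1 ∈ idealOf (f 1))
    refine ⟨a * x, ⟨a, rfl⟩, ?_⟩
    rw [hf, hfa, mul_assoc, ← hf, one_mul]

lemma IsLocalBijection.comp (hf : ∀ a b, f (a * b) = f a * f b)
    (hg : ∀ a b, g (a * b) = g a * g b) {e₁ e₂ : A} (hf₁ : IsLocalBijection f e₁)
    (hg₂ : IsLocalBijection g e₂) : ∃ c, IsLocalBijection (g ∘ f) c := by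
  obtain ⟨c, hc, hfc⟩ := hf₁.2.surjOn (⟨e₂, rfl⟩ : e₂ * f 1 ∈ idealOf (f 1))
  have hgc : g (e₂ * f 1) = g (f 1) := by rw [hg, hg₂.1, ← hg, one_mul]
  have hbf := bijOn_idealOf_of_mem hf hf₁.2 hc
  have hbg := bijOn_idealOf_of_mem hg hg₂.2 (⟨f 1, mul_comm _ _⟩ : e₂ * f 1 ∈ idealOf e₂)
  rw [hfc] at hbf
  rw [hgc] at hbg
  exact ⟨c, by simp only [Function.comp_apply, hfc, hgc], hbg.comp hbf⟩

lemma map_mul_of_invOn (hf : ∀ a b, f (a * b) = f a * f b) {e u y z : A}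
    (hbij : BijOn f (idealOf e) (idealOf u)) (hinv : InvOn g f (idealOf e) (idealOf u))
    (hy : y ∈ idealOf u) (hz : z ∈ idealOf u) : g (y * z) = g y * g z := by
  have hg := hbij.symm hinv.symm
  have hyz : y * z ∈ idealOf u := mul_comm z y ▸ mul_mem_idealOf z hy
  apply hbij.injOn (hg.mapsTo hyz) (mul_mem_idealOf _ (hg.mapsTo hz))
  rw [hinv.2 hyz, hf, hinv.2 hy, hinv.2 hz]

end LocalBijection

namespace CommHopfAlgebroid

variable (D : CommHopfAlgebroid k A H)

noncomputable def twistTensor (α : H →ₗ[k] A) : H ⊗[k] H →ₗ[k] H :=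
  LinearMap.mul' k H ∘ₗ map (D.t.toLinearMap ∘ₗ α) LinearMap.id

/-- `Φ_α h = t(α h₍₁₎) h₍₂₎`. -/
noncomputable def twist (α : H →ₗ[k] A) : H →ₗ[k] H :=
  D.twistTensor α ∘ₗ D.comul.toLinearMap

lemma brtConv_eq_comp_twist (α β : H →ₗ[k] A) : brtConv D α β = β ∘ₗ D.twist α := rfl

lemma twist_apply (α : H →ₗ[k] A) (h : H) : D.twist α h = D.twistTensor α (D.comul h) := rfl

@[simp]
lemma twistTensor_tmul (α : H →ₗ[k] A) (x y : H) :
    D.twistTensor α (x ⊗ₜ y) = D.t (α x) * y := by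
  simp [twistTensor]

lemma twistTensor_mul {α : H →ₗ[k] A} (hα : ∀ x y, α (x * y) = α x * α y) (v w : H ⊗[k] H) :
    D.twistTensor α (v * w) = D.twistTensor α v * D.twistTensor α w := by
  induction v using TensorProduct.induction_on with
  | zero => simp
  | add v₁ v₂ h₁ h₂ => simp only [add_mul, map_add, h₁, h₂]
  | tmul a b =>
    induction w using TensorProduct.induction_on with
    | zero => simp
    | add w₁ w₂ h₁ h₂ => simp only [mul_add, map_add, h₁, h₂]
    | tmul c d =>
      simp only [Algebra.TensorProduct.tmul_mul_tmul, twistTensor_tmul, hα, map_mul]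
      ring

lemma twist_mul {α : H →ₗ[k] A} (hα : ∀ x y, α (x * y) = α x * α y) (x y : H) :
    D.twist α (x * y) = D.twist α x * D.twist α y := by
  simp only [twist_apply, map_mul, D.twistTensor_mul hα]

lemma twist_t (α : H →ₗ[k] A) (a : A) : D.twist α (D.t a) = D.t (α (D.t a)) := by
  simp [twist_apply, D.comul_t]

lemma twist_one (α : H →ₗ[k] A) : D.twist α 1 = D.t (α 1) := by
  simpa using D.twist_t α 1

lemma twist_s (α : H →ₗ[k] A) (a : A) : D.twist α (D.s a) = D.t (α 1) * D.s a := by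
  simp [twist_apply, D.comul_s]

lemma comul_comp_twistTensor (α : H →ₗ[k] A) :
    D.comul.toLinearMap ∘ₗ D.twistTensor α
      = map (D.twistTensor α) LinearMap.id ∘ₗ (TensorProduct.assoc k H H H).symm.toLinearMap ∘ₗ
          map LinearMap.id D.comul.toLinearMap := by
  refine TensorProduct.ext' fun x y => ?_
  simp only [LinearMap.comp_apply, twistTensor_tmul, AlgHom.toLinearMap_apply, map_mul,
    D.comul_t, map_tmul, LinearMap.id_apply]
  induction D.comul y using TensorProduct.induction_on with
  | zero => simp
  | add w₁ w₂ h₁ h₂ => simp only [mul_add, tmul_add, map_add, h₁, h₂]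
  | tmul p q => simp [Algebra.TensorProduct.tmul_mul_tmul]

lemma twistTensor_comp_map_twist (α β : H →ₗ[k] A) :
    D.twistTensor β ∘ₗ map (D.twist α) LinearMap.id = D.twistTensor (brtConv D α β) :=
  TensorProduct.ext' fun x y => by simp [brtConv_eq_comp_twist]

lemma twist_brtConv (α β : H →ₗ[k] A) :
    D.twist (brtConv D α β) = D.twist β ∘ₗ D.twist α := by
  have hcoassoc : map D.comul.toLinearMap LinearMap.id ∘ₗ D.comul.toLinearMap
      = (TensorProduct.assoc k H H H).symm.toLinearMap ∘ₗ
          map LinearMap.id D.comul.toLinearMap ∘ₗ D.comul.toLinearMap := by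
    rw [← D.coassoc, ← LinearMap.comp_assoc, ← LinearEquiv.coe_trans,
      LinearEquiv.self_trans_symm, LinearEquiv.refl_toLinearMap, LinearMap.id_comp]
  calc D.twist (brtConv D α β)
      = D.twistTensor β ∘ₗ map (D.twistTensor α) LinearMap.id ∘ₗ
          map D.comul.toLinearMap LinearMap.id ∘ₗ D.comul.toLinearMap := by
        rw [twist, ← twistTensor_comp_map_twist, twist, ← LinearMap.id_comp LinearMap.id,
          map_comp]
        simp only [LinearMap.comp_assoc, LinearMap.id_comp]
    _ = D.twist β ∘ₗ D.twist α := by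
        rw [hcoassoc, twist, twist, LinearMap.comp_assoc,
          ← LinearMap.comp_assoc D.comul.toLinearMap (D.twistTensor α), comul_comp_twistTensor]
        simp only [LinearMap.comp_assoc]

lemma brtConv_assoc (α β γ : H →ₗ[k] A) :
    brtConv D (brtConv D α β) γ = brtConv D α (brtConv D β γ) := by
  rw [brtConv_eq_comp_twist, twist_brtConv]
  rfl

lemma brtConv_eq_of_forall_tmul {α β β' : H →ₗ[k] A} {φ ψ : H →ₗ[k] H}
    (h : ∀ x y, β (D.t (α x) * y) = β' (φ x * ψ y)) :
    brtConv D α β = β' ∘ₗ LinearMap.mul' k H ∘ₗ map φ ψ ∘ₗ D.comul.toLinearMap := by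
  have htensor : β ∘ₗ D.twistTensor α = β' ∘ₗ LinearMap.mul' k H ∘ₗ map φ ψ :=
    TensorProduct.ext' fun x y => by simpa using h x y
  exact congrArg (· ∘ₗ D.comul.toLinearMap) htensor

lemma counit_brtConv (α : H →ₗ[k] A) : brtConv D D.counit.toLinearMap α = α := by
  rw [brtConv, D.counit_left, LinearMap.comp_id]

lemma brtConv_counit {α : H →ₗ[k] A} (hα : IsBiretraction D α) :
    brtConv D α D.counit.toLinearMap = α := by
  rw [D.brtConv_eq_of_forall_tmul (β' := α) (φ := LinearMap.id)
    (ψ := D.s.toLinearMap ∘ₗ D.counit.toLinearMap), D.counit_right, LinearMap.comp_id]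
  intro x y
  simp [hα.1, hα.2.1, D.counit_t, mul_left_comm (α x), apply_mul_apply_one hα.1, mul_comm]

lemma brtConv_eq_self {γ δ : H →ₗ[k] A} (hδ : ∀ x y, δ (x * y) = δ x * δ y)
    (h : ∀ x, δ (D.t (γ x)) = δ (D.t (D.counit x))) : brtConv D γ δ = δ := by
  rw [D.brtConv_eq_of_forall_tmul (β' := δ) (φ := D.t.toLinearMap ∘ₗ D.counit.toLinearMap)
    (ψ := LinearMap.id), D.counit_left, LinearMap.comp_id]
  intro x y
  simp [hδ, h]

lemma brtConv_comp_antipode {α : H →ₗ[k] A} (hα : IsBiretraction D α) (g : A →ₗ[k] A) :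
    brtConv D α (g ∘ₗ α ∘ₗ D.antipode.toLinearMap)
      = g ∘ₗ α ∘ₗ D.t.toLinearMap ∘ₗ D.counit.toLinearMap := by
  rw [D.brtConv_eq_of_forall_tmul (β' := g ∘ₗ α) (φ := LinearMap.id)
    (ψ := D.antipode.toLinearMap), D.antipode_right]
  · rfl
  intro x y
  simp [hα.1, hα.2.1, D.antipode_t, apply_mul_apply_one hα.1]

lemma brtConv_eq_comp_counit_of_antipode {γ α : H →ₗ[k] A}
    (hα : IsBiretraction D α) (h : ∀ x, α (D.t (γ x)) = α (D.antipode x)) :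
    brtConv D γ α = α ∘ₗ D.s.toLinearMap ∘ₗ D.counit.toLinearMap := by
  rw [D.brtConv_eq_of_forall_tmul (β' := α) (φ := D.antipode.toLinearMap)
    (ψ := LinearMap.id), D.antipode_left]
  intro x y
  simp [hα.1, h]

end CommHopfAlgebroid

lemma isBrtWitness_iff_isLocalBijection (D : CommHopfAlgebroid k A H) {α : H →ₗ[k] A} {e : A} :
    IsBrtWitness D α e ↔ IsLocalBijection (fun a => α (D.t a)) e := by
  simp only [IsBrtWitness, IsLocalBijection, map_one]

lemma isBiretraction_counit (D : CommHopfAlgebroid k A H) :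
    IsBiretraction D D.counit.toLinearMap := by
  refine ⟨by simp, by simp [D.counit_s], 1, by simp, ?_⟩
  simpa [D.counit_t, Function.id_def] using bijOn_id (idealOf (1 : A))

namespace IsBiretraction

variable {D : CommHopfAlgebroid k A H} {α : H →ₗ[k] A}

lemma map_mul_t (hα : IsBiretraction D α) (a b : A) :
    α (D.t (a * b)) = α (D.t a) * α (D.t b) := by
  rw [map_mul, hα.1]

section PseudoInverse

variable {e : A} {inv : A →ₗ[k] A}

lemma pseudoInv_apply_t (hα : IsBiretraction D α) (a : A) :
    (inv ∘ₗ α ∘ₗ D.antipode.toLinearMap) (D.t a) = inv (a * α 1) := by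
  simp [D.antipode_t, hα.2.1]

lemma pseudoInv (hα : IsBiretraction D α) (hw : IsBrtWitness D α e)
    (hinv : InvOn inv (fun a => α (D.t a)) (idealOf e) (idealOf (α 1))) :
    IsBiretraction D (inv ∘ₗ α ∘ₗ D.antipode.toLinearMap) := by
  have hone : (inv ∘ₗ α ∘ₗ D.antipode.toLinearMap) 1 = e := by
    simp only [LinearMap.comp_apply, AlgHom.toLinearMap_apply, map_one D.antipode]
    rw [← hw.1, hinv.1 (self_mem_idealOf e)]
  have hmem := apply_mem_idealOf_apply_one hα.1
  refine ⟨fun x y => ?_, fun a => ?_, α 1, ?_, ?_⟩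
  · simp only [LinearMap.comp_apply, AlgHom.toLinearMap_apply, map_mul, hα.1]
    exact map_mul_of_invOn hα.map_mul_t hw.2 hinv (hmem _) (hmem _)
  · have hae : α (D.t a) = α (D.t (a * e)) := by
      rw [hα.map_mul_t, hw.1, apply_mul_apply_one hα.1]
    simp only [hone, LinearMap.comp_apply, AlgHom.toLinearMap_apply, D.antipode_s, hae]
    exact hinv.1 (mul_mem_idealOf a (self_mem_idealOf e))
  · rw [hone, pseudoInv_apply_t hα, apply_mul_apply_one hα.1, ← hw.1, hinv.1 (self_mem_idealOf e)]
  · rw [hone]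
    refine (hw.2.symm hinv.symm).congr fun a ha => ?_
    rw [pseudoInv_apply_t hα, mul_apply_one_of_mem hα.1 ha]

lemma brtConv_pseudoInv_brtConv (hα : IsBiretraction D α)
    (hinv : RightInvOn inv (fun a => α (D.t a)) (idealOf (α 1))) :
    brtConv D (brtConv D α (inv ∘ₗ α ∘ₗ D.antipode.toLinearMap)) α = α := by
  rw [D.brtConv_comp_antipode hα]
  exact D.brtConv_eq_self hα.1 fun _ => hinv (apply_mem_idealOf_apply_one hα.1 _)

lemma pseudoInv_brtConv (hα : IsBiretraction D α)
    (hinv : RightInvOn inv (fun a => α (D.t a)) (idealOf (α 1))) :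
    brtConv D (inv ∘ₗ α ∘ₗ D.antipode.toLinearMap) α
      = α ∘ₗ D.s.toLinearMap ∘ₗ D.counit.toLinearMap :=
  D.brtConv_eq_comp_counit_of_antipode hα fun _ => hinv (apply_mem_idealOf_apply_one hα.1 _)

lemma pseudoInv_brtConv_pseudoInv (hα : IsBiretraction D α) (hw : IsBrtWitness D α e)
    (hinv : InvOn inv (fun a => α (D.t a)) (idealOf e) (idealOf (α 1))) :
    brtConv D (brtConv D (inv ∘ₗ α ∘ₗ D.antipode.toLinearMap) α)
        (inv ∘ₗ α ∘ₗ D.antipode.toLinearMap)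
      = inv ∘ₗ α ∘ₗ D.antipode.toLinearMap := by
  rw [hα.pseudoInv_brtConv hinv.2]
  refine D.brtConv_eq_self (hα.pseudoInv hw hinv).1 fun x => ?_
  rw [pseudoInv_apply_t hα, pseudoInv_apply_t hα, LinearMap.comp_apply, LinearMap.comp_apply,
    AlgHom.toLinearMap_apply, AlgHom.toLinearMap_apply, hα.2.1, mul_assoc,
    apply_mul_apply_one hα.1]

end PseudoInverse

lemma brtConv {β : H →ₗ[k] A} (hα : IsBiretraction D α) (hβ : IsBiretraction D β) :
    IsBiretraction D (brtConv D α β) := by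
  refine ⟨fun x y => ?_, fun a => ?_, ?_⟩
  · simp only [D.brtConv_eq_comp_twist, LinearMap.comp_apply, D.twist_mul hα.1, hβ.1]
  · simp only [D.brtConv_eq_comp_twist, LinearMap.comp_apply, D.twist_s, D.twist_one, hβ.1,
      hβ.2.1, mul_left_comm _ a, apply_mul_apply_one hβ.1]
  · obtain ⟨e₁, hw₁⟩ := hα.2.2
    obtain ⟨e₂, hw₂⟩ := hβ.2.2
    obtain ⟨c, hc⟩ := ((isBrtWitness_iff_isLocalBijection D).1 hw₁).comp hα.map_mul_t
      hβ.map_mul_t ((isBrtWitness_iff_isLocalBijection D).1 hw₂)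
    refine ⟨c, (isBrtWitness_iff_isLocalBijection D).2 ?_⟩
    simp only [D.brtConv_eq_comp_twist, LinearMap.comp_apply, D.twist_t]
    exact hc

end IsBiretraction

/-- **`Brt(H, A)` is a regular monoid.** For a commutative Hopf algebroid `H` over
`A`, the set of local biretractions is closed under the convolution product, the
product is associative, the counit `ε` is a (two-sided) unit, and every local
biretraction `α` has a pseudo-inverse `α* = (α∘t)⁻¹ ∘ α ∘ S` with
`α ∗ α* ∗ α = α` and `α* ∗ α ∗ α* = α*`. -/
theorem Brt_is_regular_monoid (D : CommHopfAlgebroid k A H) :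
    (∀ α β : H →ₗ[k] A, IsBiretraction D α → IsBiretraction D β →
      IsBiretraction D (brtConv D α β)) ∧
    (∀ α β γ : H →ₗ[k] A, IsBiretraction D α → IsBiretraction D β → IsBiretraction D γ →
      brtConv D (brtConv D α β) γ = brtConv D α (brtConv D β γ)) ∧
    IsBiretraction D D.counit.toLinearMap ∧
    (∀ α : H →ₗ[k] A, IsBiretraction D α →
      brtConv D D.counit.toLinearMap α = α ∧ brtConv D α D.counit.toLinearMap = α) ∧
    (∀ α : H →ₗ[k] A, IsBiretraction D α → ∀ e : A, IsBrtWitness D α e →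
      ∀ inv : A →ₗ[k] A,
        (∀ x ∈ idealOf e, inv (α (D.t x)) = x) →
        (∀ y ∈ idealOf (α 1), α (D.t (inv y)) = y) →
        IsBiretraction D (inv ∘ₗ α ∘ₗ D.antipode.toLinearMap) ∧
        brtConv D (brtConv D α (inv ∘ₗ α ∘ₗ D.antipode.toLinearMap)) α = α ∧
        brtConv D (brtConv D (inv ∘ₗ α ∘ₗ D.antipode.toLinearMap) α)
            (inv ∘ₗ α ∘ₗ D.antipode.toLinearMap)
          = inv ∘ₗ α ∘ₗ D.antipode.toLinearMap) := by
  refine ⟨fun α β hα hβ => hα.brtConv hβ, fun α β γ _ _ _ => D.brtConv_assoc α β γ,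
    isBiretraction_counit D, fun α hα => ⟨D.counit_brtConv α, D.brtConv_counit hα⟩,
    fun α hα e hw inv hinv₁ hinv₂ => ?_⟩
  have hinv : InvOn inv (fun a => α (D.t a)) (idealOf e) (idealOf (α 1)) :=
    ⟨fun x hx => hinv₁ x hx, fun y hy => hinv₂ y hy⟩
  exact ⟨hα.pseudoInv hw hinv, hα.brtConv_pseudoInv_brtConv hinv.2,
    hα.pseudoInv_brtConv_pseudoInv hw hinv⟩
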